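/- arXiv:2011.04298 — 4 statements merged into one kernel-verified Lean document; each statement's English description precedes it below -/
import Mathlib

section
/- Let θ(r) = P(‖Z - x‖² ≤ r) where Z ~ N(0, I_2) and x ∈ R^2 is fixed. Then for all r > 0, e^{-‖x‖²/2}(1 - e^{-r/2})e^{-2‖x‖√r} ≤ θ(r) ≤ e^{-‖x‖²/2}(1 - e^{-r/2})e^{2‖x‖√r}. -/
open MeasureTheory ProbabilityTheory Real Set

/-!
Write `θ r` as the integral of the planar standard Gaussian density `φ` over the disk of
radius `√r` around `x`, and substitute `z = q + x`. Then
`φ (q + x) = e^{-⟪x, q⟫ - ‖x‖²/2} φ q`, and on the disk `‖q‖² ≤ r` Cauchy–Schwarz gives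
`|⟪x, q⟫| ≤ ‖x‖ √r`, so `θ r` lies within a factor `e^{± ‖x‖ √r}` of
`e^{-‖x‖²/2} ∫_{‖q‖² ≤ r} φ = e^{-‖x‖²/2} (1 - e^{-r/2})`, the last integral being computed in
polar coordinates.
-/

noncomputable def gaussianPDF2 (p : ℝ × ℝ) : ℝ :=
  (2 * π)⁻¹ * exp (-(p.1 ^ 2 + p.2 ^ 2) / 2)

def disk (r : ℝ) : Set (ℝ × ℝ) := {p | p.1 ^ 2 + p.2 ^ 2 ≤ r}

lemma measurableSet_disk (r : ℝ) : MeasurableSet (disk r) :=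
  measurableSet_le (by fun_prop) measurable_const

lemma gaussianPDF2_nonneg (p : ℝ × ℝ) : 0 ≤ gaussianPDF2 p := by
  unfold gaussianPDF2; positivity

lemma gaussianPDFReal_mul_gaussianPDFReal (p : ℝ × ℝ) :
    gaussianPDFReal 0 1 p.1 * gaussianPDFReal 0 1 p.2 = gaussianPDF2 p := by
  simp only [gaussianPDFReal, NNReal.coe_one, mul_one, sub_zero]
  rw [mul_mul_mul_comm, ← exp_add, ← mul_inv, mul_self_sqrt (by positivity), gaussianPDF2]
  ring_nf

lemma gaussianReal_prod_eq_withDensity :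
    (gaussianReal 0 1).prod (gaussianReal 0 1) =
      volume.withDensity fun p => ENNReal.ofReal (gaussianPDF2 p) := by
  rw [gaussianReal_of_var_ne_zero 0 one_ne_zero, prod_withDensity (measurable_gaussianPDF 0 1)
    (measurable_gaussianPDF 0 1), ← Measure.volume_eq_prod]
  congr with p
  rw [gaussianPDF, gaussianPDF, ← ENNReal.ofReal_mul (gaussianPDFReal_nonneg 0 1 _),
    gaussianPDFReal_mul_gaussianPDFReal]

lemma integrable_gaussianPDF2 : Integrable gaussianPDF2 := by
  simpa only [← Measure.volume_eq_prod, gaussianPDFReal_mul_gaussianPDFReal] using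
    (integrable_gaussianPDFReal 0 1).mul_prod (integrable_gaussianPDFReal 0 1)

lemma gaussianReal_prod_real_apply {U : Set (ℝ × ℝ)} (hU : MeasurableSet U) :
    ((gaussianReal 0 1).prod (gaussianReal 0 1)).real U = ∫ p in U, gaussianPDF2 p := by
  rw [measureReal_def, gaussianReal_prod_eq_withDensity, withDensity_apply _ hU,
    integral_eq_lintegral_of_nonneg_ae (ae_of_all _ gaussianPDF2_nonneg)
      (by unfold gaussianPDF2; fun_prop)]

lemma integral_disk_radial (f : ℝ → ℝ) {r : ℝ} (hr : 0 ≤ r) :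
    ∫ p in disk r, f (p.1 ^ 2 + p.2 ^ 2) = 2 * π * ∫ ρ in 0..√r, ρ * f (ρ ^ 2) := by
  set g : ℝ → ℝ := (Ioc 0 √r).indicator fun ρ => ρ * f (ρ ^ 2)
  have hpolar : ∀ p ∈ polarCoord.target,
      p.1 • (disk r).indicator (fun q => f (q.1 ^ 2 + q.2 ^ 2)) (polarCoord.symm p) =
        g p.1 := by
    rintro ⟨ρ, φ⟩ ⟨hρ, -⟩
    have hsq : (ρ * cos φ) ^ 2 + (ρ * sin φ) ^ 2 = ρ ^ 2 := by
      linear_combination ρ ^ 2 * sin_sq_add_cos_sq φ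
    have hmem : ρ ^ 2 ≤ r ↔ ρ ∈ Ioc 0 √r := by
      rw [mem_Ioc, le_sqrt (le_of_lt hρ) hr]; exact (and_iff_right hρ).symm
    by_cases h : ρ ^ 2 ≤ r
    · simp [g, disk, hsq, h, hmem.1 h]
    · simp [g, disk, hsq, h, mt hmem.2 h]
  rw [← integral_indicator (measurableSet_disk r), ← integral_comp_polarCoord_symm,
    setIntegral_congr_fun polarCoord.open_target.measurableSet hpolar]
  have htarget : polarCoord.target = Ioi 0 ×ˢ Ioo (-π) π := rfl
  rw [htarget, Measure.volume_eq_prod, ← Measure.prod_restrict, integral_fun_fst,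
    setIntegral_indicator measurableSet_Ioc, inter_eq_self_of_subset_right Ioc_subset_Ioi_self,
    ← intervalIntegral.integral_of_le (sqrt_nonneg r)]
  simp only [measureReal_restrict_apply_univ, Real.volume_real_Ioo]
  rw [max_eq_left (by linarith [pi_pos]), smul_eq_mul]
  ring

lemma integral_mul_exp_neg_sq_div_two (R : ℝ) :
    ∫ ρ in 0..R, ρ * exp (-ρ ^ 2 / 2) = 1 - exp (-R ^ 2 / 2) := by
  have hderiv : ∀ ρ ∈ uIcc 0 R,
      HasDerivAt (fun ρ => -exp (-ρ ^ 2 / 2)) (ρ * exp (-ρ ^ 2 / 2)) ρ := by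
    intro ρ _
    refine (((hasDerivAt_pow 2 ρ).neg.div_const 2).exp).neg.congr_deriv ?_
    simp only [Pi.neg_apply]
    ring
  rw [intervalIntegral.integral_eq_sub_of_hasDerivAt hderiv
    (Continuous.intervalIntegrable (by fun_prop) _ _)]
  simp
  ring

lemma integral_gaussianPDF2_disk {r : ℝ} (hr : 0 ≤ r) :
    ∫ p in disk r, gaussianPDF2 p = 1 - exp (-r / 2) := by
  simp only [gaussianPDF2]
  rw [integral_disk_radial (fun s => (2 * π)⁻¹ * exp (-s / 2)) hr]
  simp only [mul_left_comm _ ((2 * π)⁻¹), intervalIntegral.integral_const_mul,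
    integral_mul_exp_neg_sq_div_two, sq_sqrt hr]
  field_simp

lemma integral_shifted_disk (f : ℝ × ℝ → ℝ) (c : ℝ × ℝ) (r : ℝ) :
    ∫ p in {p : ℝ × ℝ | (p.1 - c.1) ^ 2 + (p.2 - c.2) ^ 2 ≤ r}, f p =
      ∫ q in disk r, f (q + c) := by
  have hpre : (· + c) ⁻¹' {p : ℝ × ℝ | (p.1 - c.1) ^ 2 + (p.2 - c.2) ^ 2 ≤ r} = disk r := by
    ext q; simp [disk]
  rw [← hpre, (measurePreserving_add_right volume c).setIntegral_preimage_emb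
    (measurableEmbedding_addRight c)]

lemma gaussianPDF2_add (q c : ℝ × ℝ) :
    gaussianPDF2 (q + c) =
      exp (-(c.1 * q.1 + c.2 * q.2) - (c.1 ^ 2 + c.2 ^ 2) / 2) * gaussianPDF2 q := by
  simp only [gaussianPDF2, Prod.fst_add, Prod.snd_add]
  rw [mul_left_comm, ← exp_add]
  ring_nf

lemma abs_mul_add_mul_le_of_mem_disk (c : ℝ × ℝ) {q : ℝ × ℝ} {r : ℝ} (hq : q ∈ disk r) :
    |c.1 * q.1 + c.2 * q.2| ≤ √(c.1 ^ 2 + c.2 ^ 2) * √r := by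
  rw [← sqrt_mul (by positivity), ← sqrt_sq_eq_abs]
  refine sqrt_le_sqrt ?_
  have : q.1 ^ 2 + q.2 ^ 2 ≤ r := hq
  nlinarith [sq_nonneg (c.1 * q.2 - c.2 * q.1), sq_nonneg c.1, sq_nonneg c.2]

lemma gaussianPDF2_add_mem_Icc (c : ℝ × ℝ) {q : ℝ × ℝ} {r : ℝ} (hq : q ∈ disk r) :
    gaussianPDF2 (q + c) ∈
      Icc (exp (-(c.1 ^ 2 + c.2 ^ 2) / 2) * exp (-(√(c.1 ^ 2 + c.2 ^ 2) * √r)) * gaussianPDF2 q)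
        (exp (-(c.1 ^ 2 + c.2 ^ 2) / 2) * exp (√(c.1 ^ 2 + c.2 ^ 2) * √r) * gaussianPDF2 q) := by
  obtain ⟨hlow, hup⟩ := abs_le.1 (abs_mul_add_mul_le_of_mem_disk c hq)
  rw [gaussianPDF2_add, ← exp_add, ← exp_add]
  exact ⟨mul_le_mul_of_nonneg_right (exp_le_exp.2 (by linarith)) (gaussianPDF2_nonneg q),
    mul_le_mul_of_nonneg_right (exp_le_exp.2 (by linarith)) (gaussianPDF2_nonneg q)⟩

lemma integral_gaussianPDF2_add_disk_mem_Icc (c : ℝ × ℝ) {r : ℝ} (hr : 0 ≤ r) :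
    ∫ q in disk r, gaussianPDF2 (q + c) ∈
      Icc (exp (-(c.1 ^ 2 + c.2 ^ 2) / 2) * (1 - exp (-r / 2)) *
          exp (-(√(c.1 ^ 2 + c.2 ^ 2) * √r)))
        (exp (-(c.1 ^ 2 + c.2 ^ 2) / 2) * (1 - exp (-r / 2)) *
          exp (√(c.1 ^ 2 + c.2 ^ 2) * √r)) := by
  have hmass (K : ℝ) :
      ∫ q in disk r, exp (-(c.1 ^ 2 + c.2 ^ 2) / 2) * exp K * gaussianPDF2 q =
        exp (-(c.1 ^ 2 + c.2 ^ 2) / 2) * (1 - exp (-r / 2)) * exp K := by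
    rw [integral_const_mul, integral_gaussianPDF2_disk hr, mul_right_comm]
  have hint : IntegrableOn (fun q => gaussianPDF2 (q + c)) (disk r) :=
    (integrable_gaussianPDF2.comp_add_right c).integrableOn
  have hint_const (a : ℝ) : IntegrableOn (fun q => a * gaussianPDF2 q) (disk r) :=
    (integrable_gaussianPDF2.const_mul a).integrableOn
  rw [← hmass, ← hmass]
  exact ⟨setIntegral_mono_on (hint_const _) hint (measurableSet_disk r)
      fun q hq => (gaussianPDF2_add_mem_Icc c hq).1,
    setIntegral_mono_on hint (hint_const _) (measurableSet_disk r)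
      fun q hq => (gaussianPDF2_add_mem_Icc c hq).2⟩

lemma toReal_pi_gaussianReal_fin_two_eq_integral (x : Fin 2 → ℝ) (r : ℝ) :
    ((Measure.pi fun _ : Fin 2 => gaussianReal 0 1)
        {z : Fin 2 → ℝ | ∑ i, (z i - x i) ^ 2 ≤ r}).toReal =
      ∫ q in disk r, gaussianPDF2 (q + (x 0, x 1)) := by
  have hpre :
      MeasurableEquiv.finTwoArrow.symm ⁻¹' {z : Fin 2 → ℝ | ∑ i, (z i - x i) ^ 2 ≤ r} =
        {p : ℝ × ℝ | (p.1 - x 0) ^ 2 + (p.2 - x 1) ^ 2 ≤ r} := by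
    ext p; simp [Fin.sum_univ_two]
  rw [← (measurePreserving_finTwoArrow _).symm.measure_preimage_equiv, hpre, ← measureReal_def,
    gaussianReal_prod_real_apply (measurableSet_le (by fun_prop) measurable_const)]
  exact integral_shifted_disk gaussianPDF2 (x 0, x 1) r

theorem stmt_3 (x : Fin 2 → ℝ) (r : ℝ) (hr : 0 < r) :
    let θ : ℝ → ℝ := fun s =>
      ((Measure.pi fun _ : Fin 2 => gaussianReal 0 1)
        {z : Fin 2 → ℝ | ∑ i, (z i - x i) ^ 2 ≤ s}).toReal
    Real.exp (-(∑ i, (x i) ^ 2) / 2) * (1 - Real.exp (-r / 2)) *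
        Real.exp (-2 * Real.sqrt (∑ i, (x i) ^ 2) * Real.sqrt r) ≤ θ r ∧
    θ r ≤ Real.exp (-(∑ i, (x i) ^ 2) / 2) * (1 - Real.exp (-r / 2)) *
        Real.exp (2 * Real.sqrt (∑ i, (x i) ^ 2) * Real.sqrt r) := by
  intro θ
  obtain ⟨hlow, hup⟩ := integral_gaussianPDF2_add_disk_mem_Icc (x 0, x 1) hr.le
  have hnorm : (x 0, x 1).1 ^ 2 + (x 0, x 1).2 ^ 2 = ∑ i, x i ^ 2 :=
    (Fin.sum_univ_two fun i => x i ^ 2).symm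
  rw [← toReal_pi_gaussianReal_fin_two_eq_integral, hnorm] at hlow hup
  have hmass : 0 ≤ 1 - exp (-r / 2) := sub_nonneg.2 (exp_le_one_iff.2 (by linarith))
  have hb : 0 ≤ √(∑ i, x i ^ 2) * √r := by positivity
  constructor
  · refine le_trans (mul_le_mul_of_nonneg_left (exp_le_exp.2 ?_) (by positivity)) hlow
    linarith
  · refine hup.trans (mul_le_mul_of_nonneg_left (exp_le_exp.2 ?_) (by positivity))
    linarith
end

section
/- Let σ ∈ {±1/√N}^N and let x ∈ R^N with ‖x‖ = 1. Define sign(x) ∈ {±1/√N}^N by sign(x)_i = 1/√N if x_i ≥ 0 and -1/√N otherwise. Then |⟨σ, sign(x)⟩| ≥ 4|⟨σ, x⟩| - 3. -/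
/-!
Write `c = 1/√N`, let `k` be the number of coordinates where `σ` agrees with `sign(x)` and put
`a = k/N`. Then `⟨σ, sign(x)⟩ = 2a - 1`, while off the agreement set every term `σᵢ xᵢ` is
nonpositive, so Cauchy–Schwarz on the agreement set gives `⟨σ, x⟩ ≤ √a`. Since
`2a - 1 - (4√a - 3) = 2(√a - 1)² ≥ 0`, this yields `⟨σ, sign(x)⟩ ≥ 4⟨σ, x⟩ - 3`; applying it
to `σ` and `-σ` gives the bound with absolute values.
-/

open Finset

namespace SignVector

variable {ι : Type*} {c : ℝ} {σ τ x : ι → ℝ}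

noncomputable def signVec (c : ℝ) (x : ι → ℝ) : ι → ℝ := fun i => if 0 ≤ x i then c else -c

lemma signVec_eq_or_eq_neg (c : ℝ) (x : ι → ℝ) (i : ι) :
    signVec c x i = c ∨ signVec c x i = -c := by
  unfold signVec
  split_ifs <;> simp

lemma sum_mul_eq_of_eq_or_eq_neg [Fintype ι] (hσ : ∀ i, σ i = c ∨ σ i = -c)
    (hτ : ∀ i, τ i = c ∨ τ i = -c) :
    ∑ i, σ i * τ i = c ^ 2 * (2 * #{i | σ i = τ i} - Fintype.card ι) := by
  have hterm : ∀ i, σ i * τ i = if σ i = τ i then c ^ 2 else -c ^ 2 := by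
    intro i
    split_ifs with h
    · rcases hτ i with h' | h' <;> rw [h, h'] <;> ring
    · rcases hσ i with h₁ | h₁ <;> rcases hτ i with h₂ | h₂ <;> rw [h₁, h₂] at h ⊢ <;>
        first | exact absurd rfl h | ring
  have hcard := card_filter_add_card_filter_not (s := univ) (fun i => σ i = τ i)
  rw [card_univ] at hcard
  rw [Fintype.sum_congr _ _ hterm, sum_ite, sum_const, sum_const, nsmul_eq_mul, nsmul_eq_mul,
    ← hcard]
  push_cast
  ring

lemma mul_nonpos_of_ne_signVec (hc : 0 ≤ c) (hσ : ∀ i, σ i = c ∨ σ i = -c) {i : ι}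
    (hi : σ i ≠ signVec c x i) : σ i * x i ≤ 0 := by
  unfold signVec at hi
  rcases hσ i with h | h <;> rw [h] at hi ⊢ <;> split_ifs at hi with hx
  · exact absurd rfl hi
  · nlinarith
  · nlinarith
  · exact absurd rfl hi

lemma sum_mul_le_mul_sqrt_card_agree [Fintype ι] (hc : 0 ≤ c) (hσ : ∀ i, σ i = c ∨ σ i = -c)
    (hx : ∑ i, x i ^ 2 ≤ 1) :
    ∑ i, σ i * x i ≤ c * √(#{i | σ i = signVec c x i} : ℝ) := by
  set A : Finset ι := {i | σ i = signVec c x i}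
  have hσsq : ∀ i, σ i ^ 2 = c ^ 2 := fun i => by rcases hσ i with h | h <;> simp [h]
  have hoff : ∑ i ∈ univ.filter (fun i => ¬ σ i = signVec c x i), σ i * x i ≤ 0 :=
    sum_nonpos fun i hi => mul_nonpos_of_ne_signVec hc hσ (mem_filter.mp hi).2
  have hxA : ∑ i ∈ A, x i ^ 2 ≤ 1 :=
    (sum_le_sum_of_subset_of_nonneg (subset_univ A) fun i _ _ => sq_nonneg (x i)).trans hx
  have hon : ∑ i ∈ A, σ i * x i ≤ c * √(#A : ℝ) :=
    calc ∑ i ∈ A, σ i * x i ≤ √(∑ i ∈ A, σ i ^ 2) * √(∑ i ∈ A, x i ^ 2) :=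
          Real.sum_mul_le_sqrt_mul_sqrt A σ x
      _ ≤ √(c ^ 2 * #A) * 1 := by
          gcongr
          · simp [hσsq, mul_comm]
          · exact Real.sqrt_le_one.mpr hxA
      _ = c * √(#A : ℝ) := by rw [mul_one, Real.sqrt_mul (sq_nonneg c), Real.sqrt_sq hc]
  rw [← sum_filter_add_sum_filter_not univ (fun i => σ i = signVec c x i)]
  linarith

lemma four_mul_sqrt_sub_three_le {a : ℝ} (ha : 0 ≤ a) : 4 * √a - 3 ≤ 2 * a - 1 := by
  nlinarith [Real.sq_sqrt ha, sq_nonneg (√a - 1)]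

lemma four_mul_sum_mul_sub_three_le [Fintype ι] (hc : 0 ≤ c)
    (hcard : c ^ 2 * Fintype.card ι = 1) (hσ : ∀ i, σ i = c ∨ σ i = -c) (hx : ∑ i, x i ^ 2 ≤ 1) :
    4 * ∑ i, σ i * x i - 3 ≤ ∑ i, σ i * signVec c x i := by
  set k : ℝ := ((#{i | σ i = signVec c x i} : ℕ) : ℝ)
  have hsign : ∑ i, σ i * signVec c x i = 2 * (c ^ 2 * k) - 1 := by
    rw [sum_mul_eq_of_eq_or_eq_neg hσ (signVec_eq_or_eq_neg c x), ← hcard]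
    ring
  have hcorr : ∑ i, σ i * x i ≤ √(c ^ 2 * k) := by
    rw [Real.sqrt_mul (sq_nonneg c), Real.sqrt_sq hc]
    exact sum_mul_le_mul_sqrt_card_agree hc hσ hx
  rw [hsign]
  linarith [four_mul_sqrt_sub_three_le (by positivity : 0 ≤ c ^ 2 * k)]

lemma four_mul_abs_sum_mul_sub_three_le [Fintype ι] (hc : 0 ≤ c)
    (hcard : c ^ 2 * Fintype.card ι = 1) (hσ : ∀ i, σ i = c ∨ σ i = -c) (hx : ∑ i, x i ^ 2 ≤ 1) :
    4 * |∑ i, σ i * x i| - 3 ≤ |∑ i, σ i * signVec c x i| := by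
  have hneg : ∀ i, -σ i = c ∨ -σ i = -c := fun i => by
    rcases hσ i with h | h <;> simp [h]
  have hpos := four_mul_sum_mul_sub_three_le hc hcard hσ hx
  have hflip := four_mul_sum_mul_sub_three_le hc hcard hneg hx
  simp only [neg_mul, sum_neg_distrib] at hflip
  cases abs_cases (∑ i, σ i * x i) <;> cases abs_cases (∑ i, σ i * signVec c x i) <;> linarith

end SignVector

open SignVector in
theorem stmt_5 (N : ℕ) (hN : 0 < N) (σ x : Fin N → ℝ)
    (hσ : ∀ i, σ i = 1 / Real.sqrt N ∨ σ i = -(1 / Real.sqrt N))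
    (hx : ∑ i, (x i) ^ 2 = 1) :
    let s : Fin N → ℝ := fun i =>
      if 0 ≤ x i then 1 / Real.sqrt N else -(1 / Real.sqrt N)
    |∑ i, σ i * s i| ≥ 4 * |∑ i, σ i * x i| - 3 := by
  intro s
  have hcard : (1 / Real.sqrt N) ^ 2 * Fintype.card (Fin N) = 1 := by
    have : (0 : ℝ) < N := by exact_mod_cast hN
    rw [Fintype.card_fin, div_pow, Real.sq_sqrt this.le]
    field_simp
  exact four_mul_abs_sum_mul_sub_three_le (by positivity) hcard hσ hx.le
end

section
/- Let P_1 be symmetric with eigenvalues μ_1 ≥ ... ≥ μ_N and orthonormal eigenvectors w_1,...,w_N, and set r_j = ⟨v_1, w_j⟩, s_j = ⟨v_2, w_j⟩ for orthonormal v_1, v_2. Then for θ not equal to any μ_j, det(I + P_0 R_1(θ)) = 1 + Σ_j (λ_1 r_j² + λ_2 s_j²)/(μ_j - θ) + (λ_1 λ_2 / 2) Σ_{j≠k} (r_j s_k - r_k s_j)²/((μ_j - θ)(μ_k - θ)), where P_0 = λ_1 v_1 v_1^T + λ_2 v_2 v_2^T and R_1(θ) = (P_1 - θI)^{-1}. 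-/
/-!
Write `P₀ = Vᵀ D V` with `V` the `2 × N` matrix of rows `v₁, v₂` and `D = diag(λ₁, λ₂)`. Sylvester's
identity `det (1 + A B) = det (1 + B A)` reduces `det (1 + P₀ R₁)` to the determinant of the
`2 × 2` matrix `1 + D V R₁ Vᵀ`, whose entries are the quadratic forms `vₐ ⬝ R₁ v_b`. Diagonalising
`P₁` in the orthonormal basis `w` gives `vₐ ⬝ R₁ v_b = ∑ⱼ ⟨vₐ, wⱼ⟩ ⟨v_b, wⱼ⟩ / (μⱼ - θ)`, and the
resulting `2 × 2` minor is expanded by Lagrange's identity into the double sum.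
-/

open Matrix

section Lagrange

variable {ι R : Type*} [Fintype ι] [DecidableEq ι] [CommRing R]

theorem sum_sum_erase_sq_sub_mul_mul (r s g : ι → R) :
    ∑ j, ∑ k ∈ Finset.univ.erase j, (r j * s k - r k * s j) ^ 2 * (g j * g k)
      = 2 * ((∑ j, r j ^ 2 * g j) * (∑ j, s j ^ 2 * g j) - (∑ j, r j * s j * g j) ^ 2) := by
  have hdiag (j : ι) : ∑ k ∈ Finset.univ.erase j, (r j * s k - r k * s j) ^ 2 * (g j * g k)
      = ∑ k, (r j * s k - r k * s j) ^ 2 * (g j * g k) :=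
    Finset.sum_erase _ (by ring)
  have hexpand (j k : ι) : (r j * s k - r k * s j) ^ 2 * (g j * g k)
      = (r j ^ 2 * g j) * (s k ^ 2 * g k) + (s j ^ 2 * g j) * (r k ^ 2 * g k)
        - 2 * ((r j * s j * g j) * (r k * s k * g k)) := by ring
  simp only [hdiag]
  simp only [hexpand, Finset.sum_sub_distrib, Finset.sum_add_distrib, ← Finset.mul_sum,
    ← Finset.sum_mul]
  ring

end Lagrange

section Diagonalization

variable {m n R : Type*}

theorem sum_smul_vecMulVec_self_eq [Fintype n] [DecidableEq n] [CommSemiring R] (μ : n → R)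
    (w : n → m → R) :
    ∑ j, μ j • vecMulVec (w j) (w j) = (of w)ᵀ * diagonal μ * of w := by
  ext i k
  simp [mul_apply, vecMulVec_apply, Matrix.sum_apply, diagonal, mul_comm, mul_left_comm]

theorem of_mul_transpose_of_eq_one [Fintype m] [DecidableEq n] [CommSemiring R] {w : n → m → R}
    (hw : ∀ j k, w j ⬝ᵥ w k = if j = k then 1 else 0) : of w * (of w)ᵀ = 1 := by
  ext j k
  simpa [mul_apply, one_apply, dotProduct] using hw j k

theorem dotProduct_transpose_mul_diagonal_mul_mulVec [Fintype m] [Fintype n] [DecidableEq n]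
    [CommSemiring R] (W : Matrix n m R) (d : n → R) (a b : m → R) :
    a ⬝ᵥ ((Wᵀ * diagonal d * W) *ᵥ b) = ∑ k, (W *ᵥ a) k * (W *ᵥ b) k * d k := by
  rw [← mulVec_mulVec, ← mulVec_mulVec, dotProduct_mulVec, vecMul_transpose]
  simp only [dotProduct, mulVec_diagonal]
  exact Finset.sum_congr rfl fun k _ => by ring

variable {𝕜 : Type*} [Fintype n] [DecidableEq n] [Field 𝕜]

theorem transpose_mul_diagonal_mul_mul_diagonal_inv {W : Matrix n n 𝕜} (hW : W * Wᵀ = 1)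
    {d : n → 𝕜} (hd : ∀ k, d k ≠ 0) :
    (Wᵀ * diagonal d * W) * (Wᵀ * diagonal d⁻¹ * W) = 1 := by
  have hdd : diagonal d * diagonal d⁻¹ = 1 := by
    rw [diagonal_mul_diagonal, ← diagonal_one]
    exact congrArg diagonal (funext fun k => mul_inv_cancel₀ (hd k))
  calc (Wᵀ * diagonal d * W) * (Wᵀ * diagonal d⁻¹ * W)
      = Wᵀ * (diagonal d * (W * Wᵀ) * diagonal d⁻¹) * W := by simp only [Matrix.mul_assoc]
    _ = Wᵀ * W := by rw [hW, Matrix.mul_one, hdd, Matrix.mul_one]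
    _ = 1 := mul_eq_one_comm.mp hW

theorem dotProduct_mulVec_eq_sum_div_sub {μ : n → 𝕜} {w : n → n → 𝕜}
    (hw : ∀ j k, w j ⬝ᵥ w k = if j = k then 1 else 0) {P R : Matrix n n 𝕜} {θ : 𝕜}
    (hP : P = ∑ j, μ j • vecMulVec (w j) (w j)) (hθ : ∀ j, θ ≠ μ j) (hR : R * (P - θ • 1) = 1)
    (a b : n → 𝕜) : a ⬝ᵥ R *ᵥ b = ∑ k, (a ⬝ᵥ w k) * (b ⬝ᵥ w k) / (μ k - θ) := by
  set W := of w
  have hW : W * Wᵀ = 1 := of_mul_transpose_of_eq_one hw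
  set d : n → 𝕜 := fun k => μ k - θ
  have hshift : P - θ • 1 = Wᵀ * diagonal d * W := by
    rw [show diagonal d = diagonal μ - θ • 1 by ext i j; by_cases h : i = j <;> simp [d, h],
      hP, sum_smul_vecMulVec_self_eq, Matrix.mul_sub, Matrix.sub_mul, Matrix.mul_smul,
      Matrix.smul_mul, Matrix.mul_one, mul_eq_one_comm.mp hW]
  have hd (k : n) : d k ≠ 0 := sub_ne_zero.mpr (hθ k).symm
  rw [left_inv_eq_right_inv hR (hshift ▸ transpose_mul_diagonal_mul_mul_diagonal_inv hW hd),
    dotProduct_transpose_mul_diagonal_mul_mulVec]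
  refine Finset.sum_congr rfl fun k _ => ?_
  simp only [W, d, mulVec, of_apply, Pi.inv_apply, div_eq_mul_inv, dotProduct_comm (w k)]

end Diagonalization

theorem det_one_add_smul_vecMulVec_add_smul_vecMulVec_mul {n R : Type*} [Fintype n]
    [DecidableEq n] [CommRing R] (l₁ l₂ : R) (v₁ v₂ : n → R) (M : Matrix n n R) :
    (1 + (l₁ • vecMulVec v₁ v₁ + l₂ • vecMulVec v₂ v₂) * M).det
      = (1 + l₁ * (v₁ ⬝ᵥ M *ᵥ v₁)) * (1 + l₂ * (v₂ ⬝ᵥ M *ᵥ v₂))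
        - l₁ * l₂ * ((v₁ ⬝ᵥ M *ᵥ v₂) * (v₂ ⬝ᵥ M *ᵥ v₁)) := by
  set V : Matrix (Fin 2) n R := of ![v₁, v₂]
  have hfactor :
      l₁ • vecMulVec v₁ v₁ + l₂ • vecMulVec v₂ v₂ = Vᵀ * (diagonal ![l₁, l₂] * V) := by
    ext i k
    rw [mul_apply]
    simp only [V, Matrix.add_apply, Matrix.smul_apply, vecMulVec_apply, smul_eq_mul,
      transpose_apply, diagonal_mul, of_apply, Fin.sum_univ_two, cons_val_zero, cons_val_one]
    ring
  have hentry (i j : Fin 2) : (V * M * Vᵀ) i j = ![v₁, v₂] i ⬝ᵥ M *ᵥ ![v₁, v₂] j := by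
    rw [mul_apply', dotProduct_mulVec]
    rfl
  rw [hfactor, Matrix.mul_assoc, det_one_add_mul_comm, Matrix.mul_assoc, Matrix.mul_assoc,
    ← Matrix.mul_assoc V, det_fin_two]
  simp only [Matrix.add_apply, diagonal_mul, hentry, one_apply_eq, one_apply_ne zero_ne_one,
    one_apply_ne one_ne_zero, cons_val_zero, cons_val_one]
  ring

theorem stmt_10_general (N : ℕ) (θ l₁ l₂ : ℝ) (μ : Fin N → ℝ) (w : Fin N → Fin N → ℝ)
    (hw : ∀ j k, w j ⬝ᵥ w k = if j = k then 1 else 0)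
    (v₁ v₂ : Fin N → ℝ)
    (P₁ R₁ : Matrix (Fin N) (Fin N) ℝ)
    (hP₁ : P₁ = ∑ j, μ j • Matrix.vecMulVec (w j) (w j))
    (hθ : ∀ j, θ ≠ μ j)
    (hR1 : R₁ * (P₁ - θ • 1) = 1 ∧ (P₁ - θ • 1) * R₁ = 1) :
    let P₀ := l₁ • Matrix.vecMulVec v₁ v₁ + l₂ • Matrix.vecMulVec v₂ v₂
    let r : Fin N → ℝ := fun j => v₁ ⬝ᵥ w j
    let s : Fin N → ℝ := fun j => v₂ ⬝ᵥ w j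
    (1 + P₀ * R₁).det
      = 1 + ∑ j, (l₁ * r j ^ 2 + l₂ * s j ^ 2) / (μ j - θ)
        + (l₁ * l₂ / 2) * ∑ j, ∑ k ∈ Finset.univ.erase j,
            (r j * s k - r k * s j) ^ 2 / ((μ j - θ) * (μ k - θ)) := by
  intro P₀ r s
  set g : Fin N → ℝ := fun k => (μ k - θ)⁻¹
  have hq (a b : Fin N → ℝ) : a ⬝ᵥ R₁ *ᵥ b = ∑ k, (a ⬝ᵥ w k) * (b ⬝ᵥ w k) * g k := by
    simp only [dotProduct_mulVec_eq_sum_div_sub hw hP₁ hθ hR1.1, g, div_eq_mul_inv]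
  have hlinear : ∑ j, (l₁ * r j ^ 2 + l₂ * s j ^ 2) / (μ j - θ)
      = l₁ * ∑ j, r j ^ 2 * g j + l₂ * ∑ j, s j ^ 2 * g j := by
    simp only [Finset.mul_sum, ← Finset.sum_add_distrib, g]
    exact Finset.sum_congr rfl fun j _ => by ring
  have hquadratic :
      ∑ j, ∑ k ∈ Finset.univ.erase j, (r j * s k - r k * s j) ^ 2 / ((μ j - θ) * (μ k - θ))
        = ∑ j, ∑ k ∈ Finset.univ.erase j, (r j * s k - r k * s j) ^ 2 * (g j * g k) := by
    simp only [g, div_eq_mul_inv, mul_inv]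
  rw [det_one_add_smul_vecMulVec_add_smul_vecMulVec_mul, hq, hq, hq, hq, hlinear, hquadratic,
    sum_sum_erase_sq_sub_mul_mul]
  simp only [r, s, sq, mul_comm (v₂ ⬝ᵥ w _) (v₁ ⬝ᵥ w _)]
  ring

theorem stmt_10 (N : ℕ) (θ l₁ l₂ : ℝ) (μ : Fin N → ℝ) (w : Fin N → Fin N → ℝ)
    (hw : ∀ j k, w j ⬝ᵥ w k = if j = k then 1 else 0)
    (v₁ v₂ : Fin N → ℝ)
    (hv₁ : v₁ ⬝ᵥ v₁ = 1) (hv₂ : v₂ ⬝ᵥ v₂ = 1) (hv₁₂ : v₁ ⬝ᵥ v₂ = 0)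
    (P₁ R₁ : Matrix (Fin N) (Fin N) ℝ)
    (hP₁ : P₁ = ∑ j, μ j • Matrix.vecMulVec (w j) (w j))
    (hθ : ∀ j, θ ≠ μ j)
    (hR1 : R₁ * (P₁ - θ • 1) = 1 ∧ (P₁ - θ • 1) * R₁ = 1) :
    let P₀ := l₁ • Matrix.vecMulVec v₁ v₁ + l₂ • Matrix.vecMulVec v₂ v₂
    let r : Fin N → ℝ := fun j => v₁ ⬝ᵥ w j
    let s : Fin N → ℝ := fun j => v₂ ⬝ᵥ w j
    (1 + P₀ * R₁).det
      = 1 + ∑ j, (l₁ * r j ^ 2 + l₂ * s j ^ 2) / (μ j - θ)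
        + (l₁ * l₂ / 2) * ∑ j, ∑ k ∈ Finset.univ.erase j,
            (r j * s k - r k * s j) ^ 2 / ((μ j - θ) * (μ k - θ)) :=
  stmt_10_general N θ l₁ l₂ μ w hw v₁ v₂ P₁ R₁ hP₁ hθ hR1
end

section
/- Let M = α x x^T with ‖x‖ = 1 and α > 0, let M' be a symmetric matrix, and let β x̃ x̃^T be the best rank-1 approximation of M' (x̃ a unit top eigenvector). Then min{‖x - x̃‖, ‖x + x̃‖} ≤ (2√2 / max{|α|, |β|}) · ‖M - M'‖, where ‖·‖ on matrices is the operator norm. -/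
/-!
Write `c = ⟪x, x̃⟫` and `s = √(1 - c²)` for the sine of the angle between `x` and `x̃`; then
`min ‖x - x̃‖ ‖x + x̃‖ = √(2 - 2|c|) ≤ √2 · s`. Applying `M - M'` to `x̃` gives
`α c x - β x̃`, whose distance to the line `ℝ x` is `|β| s`, so `|β| s ≤ ‖M - M'‖`. Applying it
to `x` gives `|α| ≤ |β| + ‖M - M'‖`, hence also `|α| s ≤ 2 ‖M - M'‖`.
-/

open RealInnerProductSpace

section
variable {F : Type*} [NormedAddCommGroup F] [InnerProductSpace ℝ F]

theorem min_norm_sub_norm_add_le_sqrt_two_mul {x y : F} (hx : ‖x‖ = 1) (hy : ‖y‖ = 1) :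
    min ‖x - y‖ ‖x + y‖ ≤ √2 * √(1 - ⟪x, y⟫ ^ 2) := by
  have hle := real_inner_le_one_of_norm_eq_one hx hy
  have hge := neg_one_le_real_inner_of_norm_eq_one hx hy
  rw [← Real.sqrt_mul zero_le_two]
  rcases le_total 0 ⟪x, y⟫ with hc | hc
  · refine (min_le_left _ _).trans (Real.le_sqrt_of_sq_le ?_)
    rw [norm_sub_sq_real, hx, hy]
    nlinarith
  · refine (min_le_right _ _).trans (Real.le_sqrt_of_sq_le ?_)
    rw [norm_add_sq_real, hx, hy]
    nlinarith

theorem abs_mul_sqrt_one_sub_inner_sq_le_norm_smul_sub_smul {x y : F} (hx : ‖x‖ = 1)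
    (hy : ‖y‖ = 1) (a b : ℝ) : |b| * √(1 - ⟪x, y⟫ ^ 2) ≤ ‖a • x - b • y‖ := by
  have hc2 : ⟪x, y⟫ ^ 2 ≤ 1 := by
    nlinarith [real_inner_le_one_of_norm_eq_one hx hy, neg_one_le_real_inner_of_norm_eq_one hx hy]
  have hnorm : ‖a • x - b • y‖ ^ 2 = (a - b * ⟪x, y⟫) ^ 2 + b ^ 2 * (1 - ⟪x, y⟫ ^ 2) := by
    rw [norm_sub_sq_real, norm_smul, norm_smul, real_inner_smul_left, real_inner_smul_right,
      hx, hy, Real.norm_eq_abs, Real.norm_eq_abs]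
    nlinarith [sq_abs a, sq_abs b]
  refine (pow_le_pow_iff_left₀ (by positivity) (norm_nonneg _) two_ne_zero).1 ?_
  rw [hnorm, mul_pow, sq_abs, Real.sq_sqrt (sub_nonneg.2 hc2)]
  nlinarith [sq_nonneg (a - b * ⟪x, y⟫)]

variable {M M' : F →L[ℝ] F} {α β : ℝ} {x xt : F}

theorem abs_mul_sqrt_one_sub_inner_sq_le_opNorm_sub (hx : ‖x‖ = 1) (hxt : ‖xt‖ = 1)
    (hM : ∀ v, M v = (α * ⟪x, v⟫) • x) (heig : M' xt = β • xt) :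
    |β| * √(1 - ⟪x, xt⟫ ^ 2) ≤ ‖M - M'‖ :=
  calc |β| * √(1 - ⟪x, xt⟫ ^ 2) ≤ ‖(M - M') xt‖ := by
        rw [sub_apply, hM, heig]
        exact abs_mul_sqrt_one_sub_inner_sq_le_norm_smul_sub_smul hx hxt _ _
    _ ≤ ‖M - M'‖ := (M - M').unit_le_opNorm xt hxt.le

theorem abs_le_abs_add_opNorm_sub (hx : ‖x‖ = 1) (hM : ∀ v, M v = (α * ⟪x, v⟫) • x)
    (htop : ∀ v, ‖M' v‖ ≤ |β| * ‖v‖) : |α| ≤ |β| + ‖M - M'‖ :=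
  calc |α| = ‖M x‖ := by
        rw [hM, inner_self_eq_one_of_norm_eq_one hx, mul_one, norm_smul, hx, mul_one,
          Real.norm_eq_abs]
    _ ≤ ‖M' x‖ + ‖(M - M') x‖ := by
        rw [sub_apply]; exact norm_le_insert' _ _
    _ ≤ |β| + ‖M - M'‖ := by
        gcongr
        · simpa [hx] using htop x
        · exact (M - M').unit_le_opNorm x hx.le

end

theorem stmt_11_general (N : ℕ) (α β : ℝ) (hα : 0 < α)
    (M M' : EuclideanSpace ℝ (Fin N) →L[ℝ] EuclideanSpace ℝ (Fin N))
    (x xt : EuclideanSpace ℝ (Fin N)) (hx : ‖x‖ = 1) (hxt : ‖xt‖ = 1)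
    (hM : ∀ v, M v = (α * ⟪x, v⟫) • x)
    (heig : M' xt = β • xt)
    (htop : ∀ v, ‖M' v‖ ≤ |β| * ‖v‖) :
    min ‖x - xt‖ ‖x + xt‖ ≤ (2 * Real.sqrt 2 / max |α| |β|) * ‖M - M'‖ := by
  set s := √(1 - ⟪x, xt⟫ ^ 2)
  have hs : s ≤ 1 := Real.sqrt_le_one.2 (sub_le_self _ (sq_nonneg _))
  have hβ := abs_mul_sqrt_one_sub_inner_sq_le_opNorm_sub hx hxt hM heig
  have hα_le := abs_le_abs_add_opNorm_sub hx hM htop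
  have hmax : 0 < max |α| |β| := lt_max_of_lt_left (abs_pos.2 hα.ne')
  have key : max |α| |β| * s ≤ 2 * ‖M - M'‖ := by
    rcases le_total |β| |α| with h | h
    · rw [max_eq_left h]
      -- `|α| s ≤ (|β| + ‖M - M'‖) s ≤ |β| s + ‖M - M'‖`, as `s ≤ 1`
      nlinarith [norm_nonneg (M - M'), Real.sqrt_nonneg (1 - ⟪x, xt⟫ ^ 2)]
    · rw [max_eq_right h]
      linarith [norm_nonneg (M - M')]
  calc min ‖x - xt‖ ‖x + xt‖ ≤ √2 * s := min_norm_sub_norm_add_le_sqrt_two_mul hx hxt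
    _ ≤ √2 * (2 * ‖M - M'‖ / max |α| |β|) := by gcongr; rwa [le_div_iff₀' hmax]
    _ = 2 * √2 / max |α| |β| * ‖M - M'‖ := by ring

theorem stmt_11 (N : ℕ) (α β : ℝ) (hα : 0 < α)
    (M M' : EuclideanSpace ℝ (Fin N) →L[ℝ] EuclideanSpace ℝ (Fin N))
    (x xt : EuclideanSpace ℝ (Fin N)) (hx : ‖x‖ = 1) (hxt : ‖xt‖ = 1)
    (hM : ∀ v, M v = (α * ⟪x, v⟫) • x)
    (hM' : ∀ u v, ⟪M' u, v⟫ = ⟪u, M' v⟫)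
    (heig : M' xt = β • xt)
    (htop : ∀ v, ‖M' v‖ ≤ |β| * ‖v‖) :
    min ‖x - xt‖ ‖x + xt‖ ≤ (2 * Real.sqrt 2 / max |α| |β|) * ‖M - M'‖ :=
  stmt_11_general N α β hα M M' x xt hx hxt hM heig htop
end
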